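/- arXiv:1706.01738 — 2 statements merged into one kernel-verified Lean document; each statement's English description precedes it below -/
import Mathlib

section
/- For the lattice triangle P with vertices v₁=(0,1), v₂=(−1,−7), v₃=(1,−4), the coefficient of n² in the Ehrhart matrix polynomial L²(nP) is the matrix [[−1/12, −1/8],[−1/8, −23/12]], which is negative definite. -/
/-
The triangle `P` is cut out by three integral half-planes, so the lattice points of `nP` form an
explicit finite set and each `L²(nP)` is a finite computation. Since `L²(nP)` is a quartic in
`n`, its values at `n = 0, …, 4` determine the coefficient of `n²` by Lagrange interpolation:
`24 c₂ = 35 L²(0P) - 104 L²(P) + 114 L²(2P) - 56 L²(3P) + 11 L²(4P)`. The resulting matrix has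
negative upper-left entry and positive determinant.
-/

open Finset Matrix

noncomputable def coeR (x : Fin 2 → ℤ) : Fin 2 → ℝ := fun i => (x i : ℝ)

/-- The rank-one symmetric matrix `u uᵗ` associated to `u ∈ ℝ²`. -/
noncomputable def msq (u : Fin 2 → ℝ) : Matrix (Fin 2) (Fin 2) ℝ := Matrix.vecMulVec u u

theorem add_smul_add_smul_mem_convexHull_triple {𝕜 E : Type*} [Field 𝕜] [LinearOrder 𝕜]
    [IsStrictOrderedRing 𝕜] [AddCommGroup E] [Module 𝕜 E] {x y z : E} {a b c : 𝕜}
    (ha : 0 ≤ a) (hb : 0 ≤ b) (hc : 0 ≤ c) (habc : a + b + c = 1) :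
    a • x + b • y + c • z ∈ convexHull 𝕜 {x, y, z} := by
  have h := (convex_convexHull 𝕜 {x, y, z}).sum_mem (t := univ) (w := ![a, b, c])
    (z := ![x, y, z]) (by simp [Fin.forall_fin_succ, ha, hb, hc])
    (by simpa [Fin.sum_univ_three] using habc)
    (fun i _ => subset_convexHull 𝕜 _ (by fin_cases i <;> simp))
  simpa [Fin.sum_univ_three] using h

-- The three functionals vanish on the edges of `t • P` and sum to `13 t`; divided by `13 t` they
-- are the barycentric coordinates of `t • (1, -4)`, `t • (0, 1)` and `t • (-1, -7)` respectively.
def triangle (t : ℝ) : Set (Fin 2 → ℝ) :=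
  {p | 0 ≤ 8 * p 0 - p 1 + t ∧ 0 ≤ -3 * p 0 + 2 * p 1 + 11 * t ∧ 0 ≤ -5 * p 0 - p 1 + t}

theorem convex_triangle (t : ℝ) : Convex ℝ (triangle t) := by
  rintro p ⟨hp₁, hp₂, hp₃⟩ q ⟨hq₁, hq₂, hq₃⟩ a b ha hb hab
  simp only [triangle, Set.mem_ofPred_eq, Pi.add_apply, Pi.smul_apply, smul_eq_mul]
  refine ⟨?_, ?_, ?_⟩ <;>
    nlinarith [mul_nonneg ha hp₁, mul_nonneg ha hp₂, mul_nonneg ha hp₃,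
      mul_nonneg hb hq₁, mul_nonneg hb hq₂, mul_nonneg hb hq₃]

theorem convexHull_eq_triangle :
    convexHull ℝ {coeR ![0, 1], coeR ![-1, -7], coeR ![1, -4]} = triangle 1 := by
  apply subset_antisymm
  · refine convexHull_min ?_ (convex_triangle 1)
    rintro p (rfl | rfl | rfl) <;> norm_num [triangle, coeR]
  · rintro p ⟨h₁, h₂, h₃⟩
    have h13 : (0 : ℝ) ≤ 13 := by norm_num
    convert add_smul_add_smul_mem_convexHull_triple (div_nonneg h₂ h13) (div_nonneg h₃ h13)
      (div_nonneg h₁ h13) (by ring)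
    ext i
    fin_cases i <;> simp [coeR] <;> ring

theorem image_smul_triangle_one {t : ℝ} (ht : 0 ≤ t) :
    (fun p => t • p) '' triangle 1 = triangle t := by
  ext p
  constructor
  · rintro ⟨q, ⟨h₁, h₂, h₃⟩, rfl⟩
    simp only [triangle, Set.mem_ofPred_eq, Pi.smul_apply, smul_eq_mul]
    refine ⟨?_, ?_, ?_⟩ <;> nlinarith
  · rintro ⟨h₁, h₂, h₃⟩
    rcases ht.eq_or_lt with rfl | ht
    · have hp : p = 0 := by
        ext i; fin_cases i <;> simp <;> linarith
      exact ⟨0, by norm_num [triangle], by simp [hp]⟩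
    · refine ⟨t⁻¹ • p, ?_, smul_inv_smul₀ ht.ne' p⟩
      simp only [triangle, Set.mem_ofPred_eq, Pi.smul_apply, smul_eq_mul]
      refine ⟨?_, ?_, ?_⟩ <;> field_simp <;> linarith

noncomputable def latticeTriangle (n : ℕ) : Finset (Fin 2 → ℤ) :=
  (Fintype.piFinset fun _ => Icc (-7 * (n : ℤ)) n).filter fun x =>
    0 ≤ 8 * x 0 - x 1 + n ∧ 0 ≤ -3 * x 0 + 2 * x 1 + 11 * n ∧ 0 ≤ -5 * x 0 - x 1 + n

theorem coeR_mem_triangle_iff (n : ℕ) (x : Fin 2 → ℤ) :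
    coeR x ∈ triangle n ↔ x ∈ latticeTriangle n := by
  simp only [triangle, latticeTriangle, Set.mem_ofPred_eq, mem_filter, Fintype.mem_piFinset,
    mem_Icc, Fin.forall_fin_two, coeR]
  constructor
  · rintro ⟨h₁, h₂, h₃⟩
    have h₁ : 0 ≤ 8 * x 0 - x 1 + n := by exact_mod_cast h₁
    have h₂ : 0 ≤ -3 * x 0 + 2 * x 1 + 11 * n := by exact_mod_cast h₂
    have h₃ : 0 ≤ -5 * x 0 - x 1 + n := by exact_mod_cast h₃
    exact ⟨⟨⟨by omega, by omega⟩, by omega, by omega⟩, h₁, h₂, h₃⟩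
  · rintro ⟨-, h₁, h₂, h₃⟩
    exact ⟨by exact_mod_cast h₁, by exact_mod_cast h₂, by exact_mod_cast h₃⟩

noncomputable def latticeSecondMoment (n : ℕ) : Matrix (Fin 2) (Fin 2) ℤ :=
  ∑ x ∈ latticeTriangle n, vecMulVec x x

theorem sum_msq_coeR (s : Finset (Fin 2 → ℤ)) :
    ∑ x ∈ s, msq (coeR x) = (Int.castAddHom ℝ).mapMatrix (∑ x ∈ s, vecMulVec x x) := by
  rw [map_sum]
  refine sum_congr rfl fun x _ => ?_
  ext i j
  simp [msq, coeR, vecMulVec]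

set_option maxRecDepth 100000 in
theorem latticeSecondMoment_interpolation :
    35 • latticeSecondMoment 0 - 104 • latticeSecondMoment 1 + 114 • latticeSecondMoment 2
      - 56 • latticeSecondMoment 3 + 11 • latticeSecondMoment 4 = !![-2, -3; -3, -46] := by
  decide

-- Lagrange interpolation at the nodes `0, …, 4`.
theorem smul_coeff_two_eq_of_quartic {M : Type*} [AddCommGroup M] [Module ℝ M] (c f : ℕ → M)
    (hf : ∀ n : ℕ, f n = ∑ i ∈ range 5, (n : ℝ) ^ i • c i) :
    (24 : ℝ) • c 2 = 35 • f 0 - 104 • f 1 + 114 • f 2 - 56 • f 3 + 11 • f 4 := by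
  simp only [hf, sum_range_succ, sum_range_zero]
  module

theorem dotProduct_mulVec_neg_of_two_by_two {a b d : ℝ} (ha : a < 0) (hdet : b ^ 2 < a * d)
    {x : Fin 2 → ℝ} (hx : x ≠ 0) : x ⬝ᵥ !![a, b; b, d] *ᵥ x < 0 := by
  have hsq : a * (x ⬝ᵥ !![a, b; b, d] *ᵥ x) =
      (a * x 0 + b * x 1) ^ 2 + (a * d - b ^ 2) * x 1 ^ 2 := by
    simp [dotProduct, mulVec, Fin.sum_univ_two]
    ring
  refine neg_of_mul_pos_right ?_ ha.le
  rw [hsq]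
  by_cases hx₁ : x 1 = 0
  · have hx₀ : x 0 ≠ 0 := fun hx₀ => hx (funext fun i => by fin_cases i <;> assumption)
    simpa [hx₁] using sq_pos_of_ne_zero (mul_ne_zero ha.ne hx₀)
  · exact add_pos_of_nonneg_of_pos (sq_nonneg _)
      (mul_pos (sub_pos.2 hdet) (sq_pos_of_ne_zero hx₁))

/-- for the lattice triangle with vertices `(0,1)`, `(−1,−7)`, `(1,−4)`,
the coefficient of `n²` in the Ehrhart matrix polynomial `L²(nP)` is
`[[−1/12, −1/8],[−1/8, −23/12]]`, which is negative definite. -/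
theorem ehrhart_matrix_coefficient_can_be_negative_definite
    (P : Set (Fin 2 → ℝ))
    (hP : P = convexHull ℝ {coeR ![0, 1], coeR ![-1, -7], coeR ![1, -4]})
    (L : ℕ → Finset (Fin 2 → ℤ))
    (hL : ∀ n x, x ∈ L n ↔ coeR x ∈ (fun p => (n : ℝ) • p) '' P)
    (c : ℕ → Matrix (Fin 2) (Fin 2) ℝ)
    (hc : ∀ n, (∑ x ∈ L n, msq (coeR x)) =
      ∑ i ∈ Finset.range 5, ((n : ℝ) ^ i) • c i) :
    c 2 = !![-1/12, -1/8; -1/8, -23/12] ∧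
    ∀ x : Fin 2 → ℝ, x ≠ 0 → x ⬝ᵥ (c 2).mulVec x < 0 := by
  have hLn : ∀ n, L n = latticeTriangle n := fun n => by
    ext x
    rw [hL, hP, convexHull_eq_triangle, image_smul_triangle_one n.cast_nonneg,
      coeR_mem_triangle_iff]
  have hmoment : ∀ n,
      ∑ x ∈ L n, msq (coeR x) = (Int.castAddHom ℝ).mapMatrix (latticeSecondMoment n) :=
    fun n => by rw [hLn, sum_msq_coeR, latticeSecondMoment]
  have h24 := smul_coeff_two_eq_of_quartic c _ hc
  simp only [hmoment, ← map_nsmul, ← map_sub, ← map_add, latticeSecondMoment_interpolation] at h24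
  have hc2 : c 2 = !![-1/12, -1/8; -1/8, -23/12] := by
    rw [← inv_smul_smul₀ (by norm_num : (24 : ℝ) ≠ 0) (c 2), h24]
    ext i j
    fin_cases i <;> fin_cases j <;> norm_num
  refine ⟨hc2, fun x hx => ?_⟩
  rw [hc2]
  exact dotProduct_mulVec_neg_of_two_by_two (by norm_num) (by norm_num) hx
end

section
/- Let v, v₁, v₂, v₃ ∈ R² with v = (v₁+v₂+v₃)/3. Then (1/2)(v+v₁)(v+v₁)^t + (1/2)(v+v₂)(v+v₂)^t + (1/2)(v+v₃)(v+v₃)^t − v v^t = (7/18)(v₁+v₂+v₃)(v₁+v₂+v₃)^t + (1/2)v₁v₁^t + (1/2)v₂v₂^t + (1/2)v₃v₃^t; in particular the left-hand side is positive semidefinite. -/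
/-! Expanding `(v + vᵢ)(v + vᵢ)ᵗ` and substituting `v₁ + v₂ + v₃ = 3v` turns the cross terms into
`(1/3) s sᵗ` and the leftover `(1/2) v vᵗ` into `(1/18) s sᵗ`, where `s = v₁ + v₂ + v₃`; this
gives the coefficient `7/18`. The right-hand side is a nonnegative combination of rank-one
matrices `u uᵗ`, hence positive semidefinite. -/

open Finset

theorem Matrix.vecMulVec_centroid_identity {K n : Type*} [Field K] [CharZero K]
    {v v₁ v₂ v₃ : n → K} (hv : v = (3⁻¹ : K) • (v₁ + v₂ + v₃)) :
    (1 / 2 : K) • vecMulVec (v + v₁) (v + v₁) + (1 / 2 : K) • vecMulVec (v + v₂) (v + v₂)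
        + (1 / 2 : K) • vecMulVec (v + v₃) (v + v₃) - vecMulVec v v
      = (7 / 18 : K) • vecMulVec (v₁ + v₂ + v₃) (v₁ + v₂ + v₃) + (1 / 2 : K) • vecMulVec v₁ v₁
        + (1 / 2 : K) • vecMulVec v₂ v₂ + (1 / 2 : K) • vecMulVec v₃ v₃ := by
  subst hv
  ext i j
  simp only [Matrix.sub_apply, Matrix.add_apply, Matrix.smul_apply, Matrix.vecMulVec_apply,
    Pi.add_apply, Pi.smul_apply, smul_eq_mul]
  ring

theorem msq_posSemidef (u : Fin 2 → ℝ) : (msq u).PosSemidef := by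
  simpa [msq] using Matrix.posSemidef_vecMulVec_self_star u

/-- if `v = (v₁+v₂+v₃)/3` then
`(1/2)(v+v₁)(v+v₁)ᵗ + (1/2)(v+v₂)(v+v₂)ᵗ + (1/2)(v+v₃)(v+v₃)ᵗ − vvᵗ
 = (7/18)(v₁+v₂+v₃)(v₁+v₂+v₃)ᵗ + (1/2)v₁v₁ᵗ + (1/2)v₂v₂ᵗ + (1/2)v₃v₃ᵗ`;
in particular the left-hand side is positive semidefinite. -/
theorem centroid_sum_of_squares_identity
    (v v₁ v₂ v₃ : Fin 2 → ℝ) (hv : v = (3⁻¹ : ℝ) • (v₁ + v₂ + v₃)) :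
    (((1 : ℝ) / 2) • msq (v + v₁) + ((1 : ℝ) / 2) • msq (v + v₂)
        + ((1 : ℝ) / 2) • msq (v + v₃) - msq v
      = ((7 : ℝ) / 18) • msq (v₁ + v₂ + v₃) + ((1 : ℝ) / 2) • msq v₁
        + ((1 : ℝ) / 2) • msq v₂ + ((1 : ℝ) / 2) • msq v₃) ∧
    (((1 : ℝ) / 2) • msq (v + v₁) + ((1 : ℝ) / 2) • msq (v + v₂)
        + ((1 : ℝ) / 2) • msq (v + v₃) - msq v).PosSemidef := by
  have identity := Matrix.vecMulVec_centroid_identity hv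
  refine ⟨identity, identity ▸ ?_⟩
  have half : (0 : ℝ) ≤ 1 / 2 := by norm_num
  have seven_eighteenths : (0 : ℝ) ≤ 7 / 18 := by norm_num
  exact ((((msq_posSemidef _).smul seven_eighteenths).add ((msq_posSemidef _).smul half)).add
    ((msq_posSemidef _).smul half)).add ((msq_posSemidef _).smul half)
end
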